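/- arXiv:1312.5967 — 2 statements merged into one kernel-verified Lean document; each statement's English description precedes it below -/
import Mathlib

section
/- Under the exponential-normal convolution model P = S + B with S ~ Exp(θ) and B ~ N(μ, σ²) independent, the conditional density of S given P = p, restricted to 0 < s < p, is f(s|p) = φ_σ(s - μ_{S.P}) / (Φ(μ_{S.P}/σ) + Φ((p - μ_{S.P})/σ) - 1), where μ_{S.P} = p - μ - σ²θ, φ_σ is the N(0,σ²) density, and Φ is the standard normal CDF. -/
open MeasureTheory

/-- The standard normal cumulative distribution function `Φ`. -/
noncomputable def stdNormalCDF (x : ℝ) : ℝ :=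
  ∫ t in Set.Iic x, Real.exp (-t ^ 2 / 2) / Real.sqrt (2 * Real.pi)

/-- The centered normal density with standard deviation `σ`, `φ_σ`. -/
noncomputable def normalPDF (σ x : ℝ) : ℝ :=
  Real.exp (-x ^ 2 / (2 * σ ^ 2)) / (σ * Real.sqrt (2 * Real.pi))

/-!
Completing the square in the exponent gives
`θ e^{-θt} φ_σ(p - t - μ) = C · φ_σ(t - μ_{S.P})` with `C = θ e^{σ²θ²/2 - θ(p - μ)}` independent
of `t`. Hence `C` cancels between numerator and denominator, the denominator becomes
`∫₀ᵖ φ_σ(t - μ_{S.P}) dt = Φ((p - μ_{S.P})/σ) - Φ(-μ_{S.P}/σ)`, and `Φ(-x) = 1 - Φ(x)`.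
-/

open ProbabilityTheory Set

lemma stdNormalCDF_eq_integral_gaussianPDFReal (x : ℝ) :
    stdNormalCDF x = ∫ t in Iic x, gaussianPDFReal 0 1 t := by
  simp [stdNormalCDF, gaussianPDFReal, div_eq_inv_mul]

lemma stdNormalCDF_neg (x : ℝ) : stdNormalCDF (-x) = 1 - stdNormalCDF x := by
  have heven : ∀ t, gaussianPDFReal 0 1 (-t) = gaussianPDFReal 0 1 t := by
    simp [gaussianPDFReal]
  have htotal := integral_add_compl (measurableSet_Iic (a := x)) (integrable_gaussianPDFReal 0 1)
  rw [integral_gaussianPDFReal_eq_one 0 one_ne_zero, compl_Iic] at htotal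
  rw [stdNormalCDF_eq_integral_gaussianPDFReal, stdNormalCDF_eq_integral_gaussianPDFReal,
    ← neg_neg x, ← integral_comp_neg_Ioi, neg_neg]
  simp only [heven]
  linarith

lemma normalPDF_neg (σ x : ℝ) : normalPDF σ (-x) = normalPDF σ x := by
  simp [normalPDF]

lemma normalPDF_eq_gaussianPDFReal_div (σ x : ℝ) :
    normalPDF σ x = gaussianPDFReal 0 1 (x / σ) / σ := by
  rcases eq_or_ne σ 0 with rfl | hσ
  · simp [normalPDF]
  simp only [normalPDF, gaussianPDFReal, NNReal.coe_one, mul_one, sub_zero, div_pow]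
  field_simp

lemma integral_normalPDF_sub {σ : ℝ} (hσ : σ ≠ 0) (m a b : ℝ) :
    ∫ t in a..b, normalPDF σ (t - m)
      = stdNormalCDF ((b - m) / σ) - stdNormalCDF ((a - m) / σ) := by
  simp only [normalPDF_eq_gaussianPDFReal_div, stdNormalCDF_eq_integral_gaussianPDFReal]
  rw [intervalIntegral.integral_div,
    intervalIntegral.integral_comp_sub_right (fun y => gaussianPDFReal 0 1 (y / σ)) m,
    intervalIntegral.integral_comp_div (gaussianPDFReal 0 1) hσ, smul_eq_mul,
    mul_div_cancel_left₀ _ hσ, intervalIntegral.integral_Iic_sub_Iic]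
  all_goals exact (integrable_gaussianPDFReal 0 1).integrableOn

lemma exp_mul_normalPDF_sub (θ σ a t : ℝ) :
    Real.exp (-θ * t) * normalPDF σ (t - a)
      = Real.exp (σ ^ 2 * θ ^ 2 / 2 - θ * a) * normalPDF σ (t - (a - σ ^ 2 * θ)) := by
  rcases eq_or_ne σ 0 with rfl | hσ
  · simp [normalPDF]
  simp only [normalPDF, mul_div_assoc', ← Real.exp_add]
  congr 2
  field_simp
  ring

theorem conditional_density_exp_normal_general
    (θ μ σ p s m : ℝ) (hθ : 0 < θ) (hσ : 0 < σ)
    (hm : m = p - μ - σ ^ 2 * θ) :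
    (θ * Real.exp (-θ * s) * normalPDF σ (p - s - μ)) /
      (∫ t in (0:ℝ)..p, θ * Real.exp (-θ * t) * normalPDF σ (p - t - μ))
    = normalPDF σ (s - m) / (stdNormalCDF (m / σ) + stdNormalCDF ((p - m) / σ) - 1) := by
  set C := θ * Real.exp (σ ^ 2 * θ ^ 2 / 2 - θ * (p - μ))
  have hC : C ≠ 0 := by positivity
  have htilt : ∀ t, θ * Real.exp (-θ * t) * normalPDF σ (p - t - μ) = C * normalPDF σ (t - m) := by
    intro t
    rw [hm, mul_assoc, show p - t - μ = -(t - (p - μ)) by ring, normalPDF_neg,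
      exp_mul_normalPDF_sub, mul_assoc]
  simp only [htilt]
  rw [intervalIntegral.integral_const_mul, mul_div_mul_left _ _ hC,
    integral_normalPDF_sub hσ.ne', zero_sub, neg_div, stdNormalCDF_neg]
  ring

/-- Under the exponential-normal convolution model (with the noise truncated to `(0, p)`),
the conditional density of `S` given `P = p` on `0 < s < p` is
`φ_σ(s - μ_{S.P}) / (Φ(μ_{S.P}/σ) + Φ((p - μ_{S.P})/σ) - 1)` with `μ_{S.P} = p - μ - σ²θ`. -/
theorem conditional_density_exp_normal
    (θ μ σ p s m : ℝ) (hθ : 0 < θ) (hσ : 0 < σ) (hs : 0 < s) (hsp : s < p)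
    (hm : m = p - μ - σ ^ 2 * θ) :
    (θ * Real.exp (-θ * s) * normalPDF σ (p - s - μ)) /
      (∫ t in (0:ℝ)..p, θ * Real.exp (-θ * t) * normalPDF σ (p - t - μ))
    = normalPDF σ (s - m) / (stdNormalCDF (m / σ) + stdNormalCDF ((p - m) / σ) - 1) :=
  conditional_density_exp_normal_general θ μ σ p s m hθ hσ hm
end

section
/- Pointwise limit of GB2 to gamma: for fixed x > 0, a = 1, u > 0 and scale β > 0, setting d = βv, the generalized beta of the second kind density |1| x^{u−1}/(d^{u} B(u,v)(1 + x/d)^{u+v}) converges, as v → ∞, to the gamma density x^{u−1} e^{−x/β}/(β^u Γ(u)). -/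
open MeasureTheory Filter

/-- The Euler beta function. -/
noncomputable def rBeta (x y : ℝ) : ℝ := Real.Gamma x * Real.Gamma y / Real.Gamma (x + y)

/-!
The GB2 density equals `x^{u-1} / (β^u Γ(u))` times `Γ(v+u) / (v^u Γ(v))` divided by
`(1 + (x/β)/v)^{u+v}`. The second factor tends to `1` (Wendel's limit) and the third to
`exp (x/β)`. Wendel's limit follows for `0 < u < 1` by squeezing the ratio between
`(v/(v+u))^{1-u}` and `1`, both bounds coming from the log-convexity of `Γ`, and extends to all
`u ≥ 0` through `Γ(s+1) = s Γ(s)`.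
-/

open Real

theorem tendsto_one_add_div_atTop (c : ℝ) :
    Tendsto (fun v : ℝ => 1 + c / v) atTop (nhds 1) := by
  simpa using tendsto_const_nhds.add (tendsto_id.const_div_atTop c)

namespace Real

section Wendel

variable {u v : ℝ}

theorem Gamma_add_le_rpow_mul_Gamma (hu₀ : 0 < u) (hu₁ : u < 1) (hv : 0 < v) :
    Gamma (v + u) ≤ v ^ u * Gamma v := by
  have hconv := Gamma_mul_add_mul_le_rpow_Gamma_mul_rpow_Gamma hv (by linarith : 0 < v + 1)
    (by linarith : 0 < 1 - u) hu₀ (by ring)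
  have hΓv := Gamma_pos_of_pos hv
  calc Gamma (v + u) = Gamma ((1 - u) * v + u * (v + 1)) := by ring_nf
    _ ≤ Gamma v ^ (1 - u) * (v * Gamma v) ^ u := by rwa [← Gamma_add_one hv.ne']
    _ = v ^ u * Gamma v := by
      rw [mul_rpow hv.le hΓv.le, mul_left_comm, ← rpow_add hΓv]
      norm_num

theorem mul_Gamma_le_rpow_mul_Gamma_add (hu₀ : 0 < u) (hu₁ : u < 1) (hv : 0 < v) :
    v * Gamma v ≤ (v + u) ^ (1 - u) * Gamma (v + u) := by
  have hvu : 0 < v + u := by linarith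
  have hconv := Gamma_mul_add_mul_le_rpow_Gamma_mul_rpow_Gamma hvu (by linarith : 0 < v + u + 1)
    hu₀ (by linarith : 0 < 1 - u) (by ring)
  have hΓvu := Gamma_pos_of_pos hvu
  calc v * Gamma v = Gamma (u * (v + u) + (1 - u) * (v + u + 1)) := by
        rw [← Gamma_add_one hv.ne']; ring_nf
    _ ≤ Gamma (v + u) ^ u * ((v + u) * Gamma (v + u)) ^ (1 - u) := by
        rwa [← Gamma_add_one hvu.ne']
    _ = (v + u) ^ (1 - u) * Gamma (v + u) := by
      rw [mul_rpow hvu.le hΓvu.le, mul_left_comm, ← rpow_add hΓvu]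
      norm_num

theorem tendsto_Gamma_add_div_rpow_mul_Gamma_of_lt_one (hu₀ : 0 < u) (hu₁ : u < 1) :
    Tendsto (fun v : ℝ => Gamma (v + u) / (v ^ u * Gamma v)) atTop (nhds 1) := by
  have hlower : ∀ᶠ v : ℝ in atTop,
      (v / (v + u)) ^ (1 - u) ≤ Gamma (v + u) / (v ^ u * Gamma v) := by
    filter_upwards [eventually_gt_atTop 0] with v hv
    have hvu : 0 < v + u := by linarith
    rw [div_rpow hv.le hvu.le, div_le_div_iff₀ (by positivity) (by positivity)]
    calc v ^ (1 - u) * (v ^ u * Gamma v) = v * Gamma v := by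
          rw [← mul_assoc, ← rpow_add hv]; norm_num
      _ ≤ (v + u) ^ (1 - u) * Gamma (v + u) := mul_Gamma_le_rpow_mul_Gamma_add hu₀ hu₁ hv
      _ = Gamma (v + u) * (v + u) ^ (1 - u) := mul_comm _ _
  have hupper : ∀ᶠ v : ℝ in atTop, Gamma (v + u) / (v ^ u * Gamma v) ≤ 1 := by
    filter_upwards [eventually_gt_atTop 0] with v hv
    have hΓv := Gamma_pos_of_pos hv
    exact (div_le_one (by positivity)).mpr (Gamma_add_le_rpow_mul_Gamma hu₀ hu₁ hv)
  have hratio : Tendsto (fun v : ℝ => v / (v + u)) atTop (nhds 1) := by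
    have hinv := (tendsto_one_add_div_atTop u).inv₀ one_ne_zero
    rw [inv_one] at hinv
    refine hinv.congr' ?_
    filter_upwards [eventually_gt_atTop 0] with v hv
    field_simp
  have hbound : Tendsto (fun v : ℝ => (v / (v + u)) ^ (1 - u)) atTop (nhds 1) := by
    simpa using hratio.rpow_const (Or.inl one_ne_zero)
  exact tendsto_of_tendsto_of_tendsto_of_le_of_le' hbound tendsto_const_nhds hlower hupper

theorem Gamma_add_add_one_div_rpow_mul_Gamma (hu : 0 ≤ u) (hv : 0 < v) :
    Gamma (v + (u + 1)) / (v ^ (u + 1) * Gamma v) =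
      (1 + u / v) * (Gamma (v + u) / (v ^ u * Gamma v)) := by
  rw [← add_assoc, Gamma_add_one (by linarith), rpow_add_one hv.ne']
  field_simp

theorem tendsto_Gamma_add_div_rpow_mul_Gamma (hu : 0 ≤ u) :
    Tendsto (fun v : ℝ => Gamma (v + u) / (v ^ u * Gamma v)) atTop (nhds 1) := by
  suffices h : ∀ (n : ℕ) {w : ℝ}, 0 ≤ w → w < 1 →
      Tendsto (fun v : ℝ => Gamma (v + (w + n)) / (v ^ (w + n) * Gamma v)) atTop (nhds 1) by
    have hsplit : u - ⌊u⌋₊ + ⌊u⌋₊ = u := sub_add_cancel _ _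
    simpa only [hsplit] using h ⌊u⌋₊ (sub_nonneg.mpr (Nat.floor_le hu))
      (by linarith [Nat.lt_floor_add_one u])
  intro n w hw₀ hw₁
  induction n with
  | zero =>
    rcases hw₀.eq_or_lt with rfl | hw₀
    · refine tendsto_const_nhds.congr' ?_
      filter_upwards [eventually_gt_atTop 0] with v hv
      simp [(Gamma_pos_of_pos hv).ne']
    · simpa using tendsto_Gamma_add_div_rpow_mul_Gamma_of_lt_one hw₀ hw₁
  | succ n ih =>
    have hstep := (tendsto_one_add_div_atTop (w + n)).mul ih
    rw [one_mul] at hstep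
    refine hstep.congr' ?_
    filter_upwards [eventually_gt_atTop 0] with v hv
    rw [Nat.cast_succ, ← add_assoc w, Gamma_add_add_one_div_rpow_mul_Gamma (by positivity) hv]

end Wendel

end Real

theorem tendsto_one_add_div_rpow_add_exp (t u : ℝ) :
    Tendsto (fun v : ℝ => (1 + t / v) ^ (u + v)) atTop (nhds (exp t)) := by
  have hbase := tendsto_one_add_div_atTop t
  have hprod := (hbase.rpow_const (Or.inl one_ne_zero) (p := u)).mul
    (tendsto_one_add_div_rpow_exp t)
  rw [one_rpow, one_mul] at hprod
  refine hprod.congr' ?_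
  filter_upwards [hbase.eventually (lt_mem_nhds one_pos)] with v hv
  rw [rpow_add hv]

theorem gb2_density_eq {x β u v : ℝ} (hβ : 0 ≤ β) (hv : 0 ≤ v) :
    x ^ (u - 1) / ((β * v) ^ u * rBeta u v * (1 + x / (β * v)) ^ (u + v)) =
      x ^ (u - 1) / (β ^ u * Gamma u) * (Gamma (v + u) / (v ^ u * Gamma v)) /
        (1 + x / β / v) ^ (u + v) := by
  rw [rBeta, mul_rpow hβ hv, div_div, add_comm u v]
  simp only [div_eq_mul_inv, mul_inv, inv_inv]
  ring

theorem gb2_tendsto_gamma_general (x β u : ℝ) (hβ : 0 < β) (hu : 0 < u) :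
    Tendsto (fun v : ℝ =>
        x ^ (u - 1) / ((β * v) ^ u * rBeta u v * (1 + x / (β * v)) ^ (u + v)))
      atTop
      (nhds (x ^ (u - 1) * Real.exp (-x / β) / (β ^ u * Real.Gamma u))) := by
  have hlim := ((tendsto_Gamma_add_div_rpow_mul_Gamma hu.le).const_mul
    (x ^ (u - 1) / (β ^ u * Gamma u))).div (tendsto_one_add_div_rpow_add_exp (x / β) u)
    (exp_ne_zero _)
  have hvalue : x ^ (u - 1) / (β ^ u * Gamma u) * 1 / exp (x / β) =
      x ^ (u - 1) * exp (-x / β) / (β ^ u * Gamma u) := by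
    rw [neg_div, exp_neg]
    ring
  rw [hvalue] at hlim
  refine hlim.congr' ?_
  filter_upwards [eventually_ge_atTop 0] with v hv
  exact (gb2_density_eq hβ.le hv).symm

/-- Pointwise limit of the GB2 density (with `a = 1`, `d = βv`) to the gamma density as
`v → ∞`: `x^{u−1}/((βv)^u B(u,v)(1 + x/(βv))^{u+v}) → x^{u−1} e^{−x/β}/(β^u Γ(u))`. -/
theorem gb2_tendsto_gamma (x β u : ℝ) (hx : 0 < x) (hβ : 0 < β) (hu : 0 < u) :
    Tendsto (fun v : ℝ =>
        x ^ (u - 1) / ((β * v) ^ u * rBeta u v * (1 + x / (β * v)) ^ (u + v)))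
      atTop
      (nhds (x ^ (u - 1) * Real.exp (-x / β) / (β ^ u * Real.Gamma u))) :=
  gb2_tendsto_gamma_general x β u hβ hu
end
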